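/- int_Reg(Hitting Set) is decidable: there is an algorithm (a computable function on finite encodings of NFAs) that, given an arbitrary NFA M over the alphabet Σ = {▷, 1, a, #, $}, decides whether there exists a word w ∈ L(M) ∩ Enc such that decode_hyp(w) = (H, k) where the hypergraph H = (V, E) admits a hitting set of size at most k, i.e., a set V' ⊆ V with |V'| ≤ k containing at least one element from each hyperedge in E. -/

import Mathlib

/-!
A run of the automaton on `encode k es` is a run on `▷1^k$` followed by one step per block
`▷a^p#▷a^q$`, and only the transition relations of the letter powers `1^k`, `a^p` matter.
On `n ≤ 2|T|` states these relations are eventually periodic with preperiod and period at most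
`2^(n²)`, so all values can be replaced at once by bounded representatives of their residue
classes (a uniform renaming of vertices and hyperedges preserves hitting sets of size `≤ k`),
and so can the threshold, which then either stays unchanged or exceeds the number of vertices
(so that all vertices form a hitting set).
A long sequence of blocks is then shortened without changing its set of blocks by cutting loops
of the run between the first occurrences of new blocks. Hence a witness exists iff one of
computably bounded size does, and searching the bounded candidates is primitive recursive.
-/

/-- The fixed five-letter alphabet Σ = {▷, 1, a, #, $}. -/
inductive Letter : Type
  | tri    -- ▷
  | one    -- 1
  | lett   -- a
  | hash   -- #
  | dollar -- $
deriving DecidableEq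

/-- Words over the alphabet Σ. -/
abbrev Word := List Letter

/-- The threshold token `▷1^k$`. -/
def thresholdTok (k : ℕ) : Word := Letter.tri :: (List.replicate k Letter.one ++ [Letter.dollar])

/-- The left vertex token `▷a^p#`. -/
def leftTok (p : ℕ) : Word := Letter.tri :: (List.replicate p Letter.lett ++ [Letter.hash])

/-- The right vertex token `▷a^q$`. -/
def rightTok (q : ℕ) : Word := Letter.tri :: (List.replicate q Letter.lett ++ [Letter.dollar])

/-- The encoding `▷1^k$ ∏_i (▷a^{p_i}# ▷a^{q_i}$)` of a threshold `k` together with a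
list of (encoded) edges. -/
def encode (k : ℕ) (es : List (ℕ × ℕ)) : Word :=
  thresholdTok k ++ (es.map (fun e => leftTok e.1 ++ rightTok e.2)).flatten

/-- The regular language `Enc = ▷1*$(▷a*#▷a*$)*` of all encodings. -/
def Enc : Set Word := { w | ∃ (k : ℕ) (es : List (ℕ × ℕ)), w = encode k es }

/-- A token: a threshold token, a left vertex token, or a right vertex token. -/
def IsToken (w : Word) : Prop :=
  (∃ k, w = thresholdTok k) ∨ (∃ p, w = leftTok p) ∨ (∃ q, w = rightTok q)

/-- A representative function is token-preserving if all representatives are tokens. -/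
def TokenPreserving {Q : Type} (rep : Q → Q → Set Word) : Prop :=
  ∀ p q : Q, ∀ w ∈ rep p q, IsToken w

def letterEquiv : Letter ≃ Fin 5 where
  toFun s :=
    match s with
    | Letter.tri => 0
    | Letter.one => 1
    | Letter.lett => 2
    | Letter.hash => 3
    | Letter.dollar => 4
  invFun n :=
    if n = 0 then Letter.tri
    else if n = 1 then Letter.one
    else if n = 2 then Letter.lett
    else if n = 3 then Letter.hash
    else Letter.dollar
  left_inv s := by cases s <;> rfl
  right_inv n := by fin_cases n <;> rfl

instance : Primcodable Letter := Primcodable.ofEquiv (Fin 5) letterEquiv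

/-- A finite encoding of an NFA over `Letter` with states named by natural numbers:
a list of transition triples, an initial state, and a list of final states. -/
abbrev NFAEnc : Type := List (ℕ × Letter × ℕ) × ℕ × List ℕ

/-- One transition step of an encoded NFA on a set of states. -/
def encStep (T : List (ℕ × Letter × ℕ)) (S : Set ℕ) (x : Letter) : Set ℕ :=
  { q' | ∃ q ∈ S, (q, x, q') ∈ T }

/-- The language accepted by an encoded NFA. -/
def encLang (M : NFAEnc) : Set Word :=
  { w | ∃ qf ∈ M.2.2, qf ∈ w.foldl (encStep M.1) {M.2.1} }

/-- A hypergraph: a finite vertex set and a finite set of hyperedges. -/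
structure FinHypergraph where
  V : Finset ℕ
  E : Finset (Finset ℕ)

/-- `H` has a hitting set of size at most `k`. -/
def HasHittingSet (H : FinHypergraph) (k : ℕ) : Prop :=
  ∃ S : Finset ℕ, S ⊆ H.V ∧ S.card ≤ k ∧ ∀ e ∈ H.E, ∃ v ∈ S, v ∈ e

/-- The hypergraph described by a list of (encoded) incidences: the vertices are the
first components; for every value `q` occurring as a second component there is a
hyperedge collecting all first components paired with `q`. -/
def hypOf (es : List (ℕ × ℕ)) : FinHypergraph where
  V := (es.map Prod.fst).toFinset
  E := (es.map Prod.snd).toFinset.image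
        (fun q => ((es.filter (fun p => p.2 = q)).map Prod.fst).toFinset)

/-- `decode_hyp(w) = (H, k)`. -/
def decodesToHyp (w : Word) (H : FinHypergraph) (k : ℕ) : Prop :=
  ∃ es : List (ℕ × ℕ), w = encode k es ∧ H = hypOf es

open scoped List

section Runs

variable {σ α β : Type*}

theorem apply_add_eq_of_apply_eq {f : ℕ → β} (F : β → β) (hF : ∀ n, f (n + 1) = F (f n))
    {i j : ℕ} (hij : f i = f j) (m : ℕ) : f (i + m) = f (j + m) := by
  induction m with
  | zero => exact hij
  | succ m ih => rw [← add_assoc, ← add_assoc, hF, hF, ih]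

def reduceMod (N d q : ℕ) : ℕ := if q < N then q else N + (q - N) % d

theorem reduceMod_of_lt {N d q : ℕ} (hq : q < N) : reduceMod N d q = q := if_pos hq

theorem le_reduceMod {N d q : ℕ} (hq : N ≤ q) : N ≤ reduceMod N d q := by
  simp [reduceMod, Nat.not_lt.2 hq]

theorem reduceMod_lt {N d : ℕ} (hd : 0 < d) (q : ℕ) : reduceMod N d q < N + d := by
  unfold reduceMod
  split_ifs with hq
  · omega
  · have := Nat.mod_lt (q - N) hd
    omega

theorem apply_reduceMod {f : ℕ → β} {N d : ℕ} (h : ∀ q, N ≤ q → f (q + d) = f q) (q : ℕ) :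
    f (reduceMod N d q) = f q := by
  unfold reduceMod
  split_ifs with hq
  · rfl
  have hperiod : ∀ c a, N ≤ a → f (a + d * c) = f a := by
    intro c
    induction c with
    | zero => simp
    | succ c ih => intro a ha; rw [mul_add, mul_one, ← add_assoc, h _ (by omega), ih a ha]
  rw [← hperiod ((q - N) / d) _ (Nat.le_add_right _ _)]
  congr 1
  have := Nat.mod_add_div (q - N) d
  omega

def listsUpTo (base : List α) (n : ℕ) : List (List α) :=
  (fun L => [] :: base.flatMap fun a => L.map (a :: ·))^[n] [[]]

theorem mem_listsUpTo {base : List α} {n : ℕ} {l : List α} :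
    l ∈ listsUpTo base n ↔ l.length ≤ n ∧ ∀ a ∈ l, a ∈ base := by
  induction n generalizing l with
  | zero => simp +contextual [listsUpTo]
  | succ n ih =>
    rw [listsUpTo, Function.iterate_succ_apply', ← listsUpTo]
    cases l with
    | nil => simp
    | cons a l => simp [ih, and_comm, and_left_comm]

def Run (R : σ → α → σ → Prop) : List α → σ → σ → Prop
  | [] => Eq
  | a :: w => Relation.Comp (R · a ·) (Run R w)

namespace Run

variable {R : σ → α → σ → Prop}

theorem append (u v : List α) : Run R (u ++ v) = Relation.Comp (Run R u) (Run R v) := by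
  induction u with
  | nil => exact Relation.eq_comp.symm
  | cons a u ih => simp only [List.cons_append, Run, ih, Relation.comp_assoc]

theorem singleton (a : α) : Run R [a] = (R · a ·) := Relation.comp_eq

theorem map_flatten (f : β → List α) (l : List β) :
    Run R (l.map f).flatten = Run (fun s b t => Run R (f b) s t) l := by
  induction l with
  | nil => rfl
  | cons b l ih => rw [List.map_cons, List.flatten_cons, append, ih]; rfl

theorem map (f : β → α) (l : List β) : Run R (l.map f) = Run (fun s b t => R s (f b) t) l := by
  induction l with
  | nil => rfl
  | cons b l ih => simp only [List.map_cons, Run, ih]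

theorem mono {R' : σ → α → σ → Prop} (hR : ∀ s a t, R s a t → R' s a t) :
    ∀ {w s t}, Run R w s t → Run R' w s t
  | [], _, _, h => h
  | _ :: _, _, _, ⟨m, hsm, hmt⟩ => ⟨m, hR _ _ _ hsm, mono hR hmt⟩

theorem mem_of_ne_nil {S : Finset σ} (hR : ∀ s a t, R s a t → s ∈ S ∧ t ∈ S) :
    ∀ {w s t}, w ≠ [] → Run R w s t → s ∈ S ∧ t ∈ S
  | [], _, _, hw, _ => absurd rfl hw
  | [_], _, _, _, ⟨_, hsm, rfl⟩ => hR _ _ _ hsm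
  | _ :: b :: w, _, _, _, ⟨_, hsm, hmt⟩ =>
    ⟨(hR _ _ _ hsm).1, (mem_of_ne_nil hR (List.cons_ne_nil b w) hmt).2⟩

theorem exists_first_visit :
    ∀ {w s t}, w ≠ [] → Run R w s t →
      ∃ u a v m, w = u ++ a :: v ∧ Run (fun x a y => R x a y ∧ y ≠ t) u s m ∧ R m a t
  | [], _, _, hw, _ => absurd rfl hw
  | a :: w, s, t, _, ⟨m, hsm, hmt⟩ => by
    by_cases hm : m = t
    · exact ⟨[], a, w, s, rfl, rfl, hm ▸ hsm⟩
    · have hw : w ≠ [] := by rintro rfl; exact hm hmt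
      obtain ⟨u, b, v, m', rfl, hu, hm't⟩ := exists_first_visit hw hmt
      exact ⟨a :: u, b, v, m', rfl, ⟨m, ⟨hsm, hm⟩, hu⟩, hm't⟩

-- Cut the run at its first visit to `t`: the part before avoids `t`, so recurse on `S.erase t`.
theorem exists_sublist_length_le_card [DecidableEq σ] (S : Finset σ) {R : σ → α → σ → Prop}
    (hR : ∀ s a t, R s a t → t ∈ S) {w : List α} {s t : σ} (h : Run R w s t) :
    ∃ w', w' <+ w ∧ Run R w' s t ∧ w'.length ≤ S.card := by
  rcases eq_or_ne w [] with rfl | hw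
  · exact ⟨[], List.Sublist.refl _, h, by simp⟩
  obtain ⟨u, a, v, m, rfl, hu, hmt⟩ := exists_first_visit hw h
  have ht : t ∈ S := hR _ _ _ hmt
  obtain ⟨u', hu'u, hu', hlen⟩ := exists_sublist_length_le_card (S.erase t)
    (fun x b y hxy => Finset.mem_erase.2 ⟨hxy.2, hR _ _ _ hxy.1⟩) hu
  refine ⟨u' ++ [a], hu'u.append (List.singleton_sublist.2 List.mem_cons_self), ?_, ?_⟩
  · rw [append, singleton]
    exact ⟨m, mono (fun _ _ _ h => h.1) hu', hmt⟩
  · have := Finset.card_erase_lt_of_mem ht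
    simp only [List.length_append, List.length_singleton]
    omega
termination_by S.card
decreasing_by exact Finset.card_erase_lt_of_mem ht

theorem card_toFinset_sdiff_insert_lt [DecidableEq α] {A : Finset α} {a : α} (ha : a ∉ A)
    (u v : List α) : (v.toFinset \ insert a A).card < ((u ++ a :: v).toFinset \ A).card := by
  refine Finset.card_lt_card
    ((Finset.ssubset_iff_of_subset fun b => ?_).2 ⟨a, by simp [ha], by simp⟩)
  simp +contextual

-- The maximal prefix with labels in `A` is shortened by loop removal; the first label outside `A`
-- is kept and added to `A` for the rest of the word.
theorem exists_sublist_forall_mem_length_le [DecidableEq σ] [DecidableEq α] (S : Finset σ)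
    (hR : ∀ s a t, R s a t → t ∈ S) (A : Finset α) {w : List α} {s t : σ} (h : Run R w s t) :
    ∃ w', w' <+ w ∧ Run R w' s t ∧ (∀ a ∈ w, a ∈ w' ∨ a ∈ A) ∧
      w'.length ≤ ((w.toFinset \ A).card + 1) * (S.card + 1) := by
  obtain ⟨u, hsplit, hpre⟩ : ∃ u, u ++ w.dropWhile (· ∈ A) = w ∧ ∀ a ∈ u, a ∈ A :=
    ⟨_, List.takeWhile_append_dropWhile, fun a ha => by simpa using List.mem_takeWhile_imp ha⟩
  rw [← hsplit, append] at h
  obtain ⟨m, hu, hv⟩ := h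
  obtain ⟨u', hu'u, hu', hu'len⟩ := exists_sublist_length_le_card S hR hu
  cases hdrop : w.dropWhile (· ∈ A) with
  | nil =>
    rw [hdrop, List.append_nil] at hsplit
    rw [hdrop] at hv
    subst hsplit hv
    refine ⟨u', hu'u, hu', fun a ha => Or.inr (hpre a ha), ?_⟩
    calc u'.length ≤ S.card + 1 := by omega
      _ ≤ _ := Nat.le_mul_of_pos_left _ (Nat.succ_pos _)
  | cons a v =>
    have ha : a ∉ A := by
      simpa [hdrop] using List.head_dropWhile_not (· ∈ A) (l := w) (by simp [hdrop])
    rw [hdrop] at hsplit hv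
    subst hsplit
    obtain ⟨m', hmm', hv⟩ := hv
    obtain ⟨v', hv'v, hv', hv'mem, hv'len⟩ :=
      exists_sublist_forall_mem_length_le S hR (insert a A) hv
    refine ⟨u' ++ a :: v', hu'u.append (hv'v.cons_cons a), ?_, ?_, ?_⟩
    · rw [append]
      exact ⟨m, hu', m', hmm', hv'⟩
    · intro b hb
      have := hpre b
      have := hv'mem b
      simp only [List.mem_append, List.mem_cons, Finset.mem_insert] at *
      tauto
    · have hmul := Nat.mul_le_mul_right (S.card + 1) (card_toFinset_sdiff_insert_lt ha u v)
      simp only [List.length_append, List.length_cons]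
      nlinarith
termination_by w.length
decreasing_by
  have := (List.dropWhile_sublist (· ∈ A) (l := w)).length_le
  rw [‹List.dropWhile _ w = a :: v›, List.length_cons] at this
  omega

theorem exists_replicate_period {S : Finset σ}
    (hR : ∀ s a t, R s a t → s ∈ S ∧ t ∈ S) (x : α) {n : ℕ} (hn : S.card ≤ n) :
    ∃ d, 0 < d ∧ d ≤ 2 ^ (n * n) ∧
      ∀ q, 2 ^ (n * n) ≤ q → Run R (List.replicate (q + d) x) = Run R (List.replicate q x) := by
  classical
  set f : ℕ → σ → σ → Prop := fun q => Run R (List.replicate q x) with hf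
  have hF : ∀ q, f (q + 1) = Relation.Comp (f q) (R · x ·) := fun q => by
    simp only [hf, List.replicate_succ', append, singleton]
  -- for `q ≥ 1`, `f q` is determined by its restriction to `S × S`
  let fingerprint : ℕ → Finset (σ × σ) := fun q => (S ×ˢ S).filter fun p => f q p.1 p.2
  have hfingerprint : ∀ {i j}, 0 < i → 0 < j → fingerprint i = fingerprint j → f i = f j := by
    intro i j hi hj hij
    funext s t
    have key : ∀ {q}, 0 < q → (f q s t ↔ (s, t) ∈ fingerprint q) := fun {q} hq => by
      have : f q s t → s ∈ S ∧ t ∈ S := mem_of_ne_nil hR (by simpa using hq.ne')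
      simp only [fingerprint, Finset.mem_filter, Finset.mem_product]
      tauto
    rw [propext (key hi), propext (key hj), hij]
  have hcard : ((S ×ˢ S).powerset).card < (Finset.Icc 1 (2 ^ (n * n) + 1)).card := by
    rw [Finset.card_powerset, Finset.card_product, Nat.card_Icc]
    have := Nat.pow_le_pow_right (show 0 < 2 by norm_num) (Nat.mul_le_mul hn hn)
    omega
  obtain ⟨i, hi, j, hj, hne, hij⟩ := Finset.exists_ne_map_eq_of_card_lt_of_maps_to hcard
    (f := fingerprint) fun q _ => Finset.mem_powerset.2 (Finset.filter_subset _ _)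
  simp only [Finset.mem_Icc] at hi hj
  wlog hlt : i < j generalizing i j
  · exact this j i hne.symm hij.symm hj hi (by omega)
  refine ⟨j - i, by omega, by omega, fun q hq => ?_⟩
  have := apply_add_eq_of_apply_eq (Relation.Comp · (R · x ·)) hF
    (hfingerprint (by omega) (by omega) hij) (q - i)
  convert this.symm using 3 <;> omega

end Run

end Runs

section Primrec

open Primrec

variable {α β : Type*} [Primcodable α] [Primcodable β]

theorem PrimrecPred.exists_mem {f : α → List β} {p : α → β → Prop} (hf : Primrec f)
    (hp : PrimrecRel p) : PrimrecPred fun a => ∃ b ∈ f a, p a b :=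
  (PrimrecRel.exists_mem_list (hp.comp₂ Primrec₂.right Primrec₂.left)).comp hf Primrec.id

theorem PrimrecPred.forall_mem {f : α → List β} {p : α → β → Prop} (hf : Primrec f)
    (hp : PrimrecRel p) : PrimrecPred fun a => ∀ b ∈ f a, p a b :=
  (PrimrecRel.forall_mem_list (hp.comp₂ Primrec₂.right Primrec₂.left)).comp hf Primrec.id

theorem PrimrecRel.mem [DecidableEq β] : PrimrecRel fun (a : β) (l : List β) => a ∈ l :=
  (PrimrecPred.exists_mem (p := fun p b => b = p.1) snd
    (Primrec.eq.comp snd (fst.comp fst))).of_eq fun _ => by simp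

theorem Primrec.nat_pow : Primrec₂ fun a b : ℕ => a ^ b := Primrec₂.unpaired'.1 Nat.Primrec.pow

theorem Primrec.list_replicate (a : β) : Primrec fun n => List.replicate n a :=
  (list_map list_range (Primrec₂.const a)).of_eq fun _ => by simp

theorem Primrec.listsUpTo : Primrec₂ (listsUpTo : List β → ℕ → List (List β)) := by
  have hstep : Primrec₂ fun (p : List β × ℕ) (L : List (List β)) =>
      [] :: p.1.flatMap fun a => L.map (a :: ·) :=
    list_cons.comp (const []) (list_flatMap (fst.comp fst)
      (list_map (snd.comp fst) (list_cons.comp (snd.comp fst) snd).to₂).to₂)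
  exact nat_iterate snd (const [[]]) hstep

end Primrec

abbrev TransitionList := List (ℕ × Letter × ℕ)

def Transition (T : TransitionList) (s : ℕ) (x : Letter) (t : ℕ) : Prop := (s, x, t) ∈ T

def states (T : TransitionList) : Finset ℕ := (T.flatMap fun tr => [tr.1, tr.2.2]).toFinset

theorem transition_mem_states {T : TransitionList} {s t : ℕ} {x : Letter}
    (h : Transition T s x t) :
    s ∈ states T ∧ t ∈ states T := by
  constructor <;> exact List.mem_toFinset.2 (List.mem_flatMap.2 ⟨_, h, by simp⟩)

theorem card_states_le (T : TransitionList) : (states T).card ≤ 2 * T.length :=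
  (List.toFinset_card_le _).trans_eq (by simp [List.length_flatMap, mul_comm])

theorem foldl_encStep (T : TransitionList) (w : Word) (S : Set ℕ) :
    w.foldl (encStep T) S = {t | ∃ s ∈ S, Run (Transition T) w s t} := by
  induction w generalizing S with
  | nil => ext t; simp [Run]
  | cons x w ih =>
    ext t
    simp only [List.foldl_cons, ih, encStep, Run, Relation.Comp, Transition]
    constructor
    · rintro ⟨m, ⟨s, hs, hsm⟩, hmt⟩; exact ⟨s, hs, m, hsm, hmt⟩
    · rintro ⟨s, hs, m, hsm, hmt⟩; exact ⟨m, ⟨s, hs, hsm⟩, hmt⟩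

theorem mem_encLang_iff_run {M : NFAEnc} {w : Word} :
    w ∈ encLang M ↔ ∃ qf ∈ M.2.2, Run (Transition M.1) w M.2.1 qf := by
  simp [encLang, foldl_encStep]

def stepList (T : TransitionList) (S : List ℕ) (x : Letter) : List ℕ :=
  (T.filter fun tr => tr.1 ∈ S ∧ tr.2.1 = x).map fun tr => tr.2.2

theorem foldl_stepList (T : TransitionList) (w : Word) (S : List ℕ) :
    {t | t ∈ w.foldl (stepList T) S} = w.foldl (encStep T) {s | s ∈ S} := by
  induction w generalizing S with
  | nil => rfl
  | cons x w ih =>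
    rw [List.foldl_cons, List.foldl_cons, ih]
    congr 1
    ext t
    simp [stepList, encStep, and_assoc, and_left_comm]

theorem mem_encLang_iff_stepList {M : NFAEnc} {w : Word} :
    w ∈ encLang M ↔ ∃ qf ∈ M.2.2, qf ∈ w.foldl (stepList M.1) [M.2.1] := by
  have : ({M.2.1} : Set ℕ) = {s | s ∈ [M.2.1]} := by simp
  simp only [encLang, this, ← foldl_stepList]; rfl

theorem run_encode (R : ℕ → Letter → ℕ → Prop) (k : ℕ) (es : List (ℕ × ℕ)) :
    Run R (encode k es) = Relation.Comp (Run R (thresholdTok k))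
      (Run (fun s e t => Run R (leftTok e.1 ++ rightTok e.2) s t) es) := by
  rw [encode, Run.append, Run.map_flatten]

theorem run_encode_of_run_replicate_eq {R : ℕ → Letter → ℕ → Prop} {k k' : ℕ}
    (h : Run R (List.replicate k' Letter.one) = Run R (List.replicate k Letter.one))
    (es : List (ℕ × ℕ)) : Run R (encode k' es) = Run R (encode k es) := by
  simp only [run_encode, thresholdTok, Run, Run.append, h]

theorem run_encode_map {R : ℕ → Letter → ℕ → Prop} {g : ℕ → ℕ}
    (hg : ∀ p, Run R (List.replicate (g p) Letter.lett) = Run R (List.replicate p Letter.lett))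
    (k : ℕ) (es : List (ℕ × ℕ)) :
    Run R (encode k (es.map (Prod.map g g))) = Run R (encode k es) := by
  rw [run_encode, run_encode, Run.map]
  congr 2
  funext s e t
  simp only [Prod.map, leftTok, rightTok, Run, Run.append, hg]

def Coverable (k : ℕ) (es : List (ℕ × ℕ)) : Prop :=
  ∃ C : List ℕ, C.length ≤ k ∧ ∀ e ∈ es, ∃ e' ∈ es, e'.2 = e.2 ∧ e'.1 ∈ C

theorem hasHittingSet_hypOf_iff {k : ℕ} {es : List (ℕ × ℕ)} :
    HasHittingSet (hypOf es) k ↔ Coverable k es := by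
  constructor
  · rintro ⟨S, -, hcard, hhit⟩
    refine ⟨S.toList, by simpa using hcard, fun e he => ?_⟩
    obtain ⟨v, hvS, hv⟩ := hhit ((es.filter (·.2 = e.2)).map Prod.fst).toFinset
      (Finset.mem_image.2 ⟨e.2, by simpa using ⟨e.1, he⟩, rfl⟩)
    obtain ⟨e', he', rfl⟩ := List.mem_map.1 (List.mem_toFinset.1 hv)
    obtain ⟨he', he'2⟩ := List.mem_filter.1 he'
    exact ⟨e', he', by simpa using he'2, by simpa using hvS⟩
  · rintro ⟨C, hlen, hC⟩
    refine ⟨C.toFinset ∩ (hypOf es).V, Finset.inter_subset_right,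
      (Finset.card_le_card Finset.inter_subset_left).trans
        ((List.toFinset_card_le C).trans hlen), ?_⟩
    simp only [hypOf, Finset.mem_image, List.mem_toFinset, List.mem_map, Prod.exists,
      exists_eq_right]
    rintro _ ⟨_, ⟨a, hq⟩, rfl⟩
    obtain ⟨e', he', he'2, he'C⟩ := hC _ hq
    refine ⟨e'.1, ?_, ?_⟩ <;> simp only [Finset.mem_inter, List.mem_toFinset, List.mem_map,
      List.mem_filter, decide_eq_true_eq]
    exacts [⟨he'C, e', he', rfl⟩, ⟨e', ⟨he', he'2⟩, rfl⟩]

theorem Coverable.map {k : ℕ} {es : List (ℕ × ℕ)} (g : ℕ → ℕ) (h : Coverable k es) :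
    Coverable k (es.map (Prod.map g g)) := by
  obtain ⟨C, hlen, hC⟩ := h
  refine ⟨C.map g, by simpa using hlen, ?_⟩
  simp only [List.mem_map, forall_exists_index, and_imp, forall_apply_eq_imp_iff₂]
  intro e he
  obtain ⟨e', he', he'2, he'C⟩ := hC e he
  exact ⟨_, ⟨e', he', rfl⟩, by simp [he'2], e'.1, he'C, rfl⟩

theorem Coverable.of_forall_mem_iff {k : ℕ} {es es' : List (ℕ × ℕ)}
    (hes : ∀ e, e ∈ es ↔ e ∈ es') (h : Coverable k es) : Coverable k es' := by
  obtain ⟨C, hlen, hC⟩ := h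
  exact ⟨C, hlen, fun e he => by simpa only [← hes] using hC e ((hes e).2 he)⟩

theorem coverable_of_card_le {k : ℕ} {es : List (ℕ × ℕ)}
    (h : (es.map Prod.fst).toFinset.card ≤ k) : Coverable k es :=
  ⟨(es.map Prod.fst).toFinset.toList, by simpa using h,
    fun e he => ⟨e, he, rfl, by simpa using ⟨e.2, he⟩⟩⟩

theorem coverable_iff_exists_mem_listsUpTo {k : ℕ} {es : List (ℕ × ℕ)} :
    Coverable k es ↔
      ∃ C ∈ listsUpTo (es.map Prod.fst) k, ∀ e ∈ es, ∃ e' ∈ es, e'.2 = e.2 ∧ e'.1 ∈ C := by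
  constructor
  · rintro ⟨C, hlen, hC⟩
    refine ⟨C.filter (· ∈ es.map Prod.fst), mem_listsUpTo.2 ⟨(List.length_filter_le _ _).trans hlen,
      fun a ha => by simpa using (List.mem_filter.1 ha).2⟩, fun e he => ?_⟩
    obtain ⟨e', he', he'2, he'C⟩ := hC e he
    exact ⟨e', he', he'2, List.mem_filter.2 ⟨he'C, by simpa using ⟨e'.2, he'⟩⟩⟩
  · rintro ⟨C, hC, hcov⟩
    exact ⟨C, (mem_listsUpTo.1 hC).1, hcov⟩

-- `2 * T.length` bounds the number of states, and `2 ^ (n * n)` the number of relations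
-- on `n` states.
def periodBound (T : TransitionList) : ℕ := 2 ^ (2 * T.length * (2 * T.length))

theorem exists_run_replicate_reduceMod (T : TransitionList) (x : Letter) :
    ∃ d, 0 < d ∧ d ≤ periodBound T ∧ ∀ N, periodBound T ≤ N → ∀ q,
      Run (Transition T) (List.replicate (reduceMod N d q) x) =
        Run (Transition T) (List.replicate q x) := by
  obtain ⟨d, hd, hdP, hper⟩ := Run.exists_replicate_period
    (fun _ _ _ => transition_mem_states) x (card_states_le T)
  exact ⟨d, hd, hdP, fun N hN => apply_reduceMod (f := fun q => Run _ (List.replicate q x))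
    fun q hq => hper q (hN.trans hq)⟩

def lengthBound (T : TransitionList) : ℕ := ((2 * periodBound T) ^ 2 + 1) * (2 * T.length + 1)

section Shrinking

variable {T : TransitionList} {s t k : ℕ} {es : List (ℕ × ℕ)}

theorem exists_values_lt (h : Run (Transition T) (encode k es) s t) (hc : Coverable k es) :
    ∃ es', (∀ e ∈ es', e.1 < 2 * periodBound T ∧ e.2 < 2 * periodBound T) ∧
      Run (Transition T) (encode k es') s t ∧ Coverable k es' := by
  obtain ⟨g, hg, hred⟩ : ∃ g : ℕ → ℕ, (∀ v, g v < 2 * periodBound T) ∧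
      ∀ v, Run (Transition T) (List.replicate (g v) Letter.lett) =
        Run (Transition T) (List.replicate v Letter.lett) := by
    obtain ⟨d, hd, hdP, hred⟩ := exists_run_replicate_reduceMod T Letter.lett
    exact ⟨reduceMod (periodBound T) d,
      fun v => by have := reduceMod_lt (N := periodBound T) hd v; omega, hred _ le_rfl⟩
  refine ⟨es.map (Prod.map g g), ?_, by rwa [run_encode_map hred], hc.map g⟩
  simp only [List.mem_map, Prod.exists, Prod.map, forall_exists_index, and_imp]
  rintro _ a b - rfl
  exact ⟨hg a, hg b⟩

theorem exists_length_le {V : ℕ} (hval : ∀ e ∈ es, e.1 < V ∧ e.2 < V)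
    (h : Run (Transition T) (encode k es) s t) (hc : Coverable k es) :
    ∃ es', es' <+ es ∧ es'.length ≤ (V ^ 2 + 1) * (2 * T.length + 1) ∧
      Run (Transition T) (encode k es') s t ∧ Coverable k es' := by
  rw [run_encode] at h
  obtain ⟨m, hk, hes⟩ := h
  have hblock : ∀ (s : ℕ) (e : ℕ × ℕ) (t : ℕ),
      Run (Transition T) (leftTok e.1 ++ rightTok e.2) s t → t ∈ states T :=
    fun _ _ _ h => (Run.mem_of_ne_nil (fun _ _ _ => transition_mem_states) (by simp [leftTok]) h).2
  obtain ⟨es', hsub, hrun, hmem, hlen⟩ :=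
    Run.exists_sublist_forall_mem_length_le (states T) hblock ∅ hes
  have hcard : es.toFinset.card ≤ V ^ 2 := by
    have : es.toFinset ⊆ Finset.range V ×ˢ Finset.range V := fun e he => by
      simpa using hval e (List.mem_toFinset.1 he)
    simpa [sq] using Finset.card_le_card this
  refine ⟨es', hsub, ?_, ?_, hc.of_forall_mem_iff fun e => ⟨fun he => ?_, fun he => hsub.subset he⟩⟩
  · rw [Finset.sdiff_empty] at hlen
    exact hlen.trans (Nat.mul_le_mul (by omega) (by have := card_states_le T; omega))
  · rw [run_encode]
    exact ⟨m, hk, hrun⟩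
  · simpa using hmem e he

theorem exists_threshold_lt (hval : ∀ e ∈ es, e.1 < 2 * periodBound T)
    (h : Run (Transition T) (encode k es) s t) (hc : Coverable k es) :
    ∃ k' < 3 * periodBound T, Run (Transition T) (encode k' es) s t ∧ Coverable k' es := by
  obtain ⟨d, hd, hdP, hred⟩ := exists_run_replicate_reduceMod T Letter.one
  let k' := reduceMod (2 * periodBound T) d k
  refine ⟨k', by have := reduceMod_lt (N := 2 * periodBound T) hd k; omega,
    by rwa [run_encode_of_run_replicate_eq (hred _ (by omega) k)], ?_⟩
  by_cases hk : k < 2 * periodBound T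
  · rwa [show k' = k from reduceMod_of_lt hk]
  · -- a threshold of at least `2 * periodBound T` exceeds the number of vertices
    refine coverable_of_card_le (le_trans ?_ (le_reduceMod (Nat.not_lt.1 hk)))
    have : (es.map Prod.fst).toFinset ⊆ Finset.range (2 * periodBound T) := fun v hv => by
      obtain ⟨e, he, rfl⟩ := List.mem_map.1 (List.mem_toFinset.1 hv)
      simpa using hval e he
    simpa using Finset.card_le_card this

theorem exists_small_of_run (h : Run (Transition T) (encode k es) s t) (hc : Coverable k es) :
    ∃ k' < 3 * periodBound T, ∃ es', es'.length ≤ lengthBound T ∧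
      (∀ e ∈ es', e.1 < 2 * periodBound T ∧ e.2 < 2 * periodBound T) ∧
      Run (Transition T) (encode k' es') s t ∧ Coverable k' es' := by
  obtain ⟨es₁, hval₁, h₁, hc₁⟩ := exists_values_lt h hc
  obtain ⟨es₂, hsub, hlen, h₂, hc₂⟩ := exists_length_le hval₁ h₁ hc₁
  have hval₂ := fun e he => hval₁ e (hsub.subset he)
  obtain ⟨k', hk', h₃, hc₃⟩ := exists_threshold_lt (fun e he => (hval₂ e he).1) h₂ hc₂
  exact ⟨k', hk', es₂, hlen, hval₂, h₃, hc₃⟩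

end Shrinking

theorem exists_hittingSet_iff (M : NFAEnc) :
    (∃ w : Word, w ∈ encLang M ∧ w ∈ Enc ∧
        ∃ (H : FinHypergraph) (k : ℕ), decodesToHyp w H k ∧ HasHittingSet H k) ↔
      ∃ k es, encode k es ∈ encLang M ∧ Coverable k es := by
  constructor
  · rintro ⟨_, hw, -, _, k, ⟨es, rfl, rfl⟩, hH⟩
    exact ⟨k, es, hw, hasHittingSet_hypOf_iff.1 hH⟩
  · rintro ⟨k, es, hw, hc⟩
    exact ⟨_, hw, ⟨k, es, rfl⟩, _, k, ⟨es, rfl, rfl⟩, hasHittingSet_hypOf_iff.2 hc⟩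

def candidates (T : TransitionList) : List (List (ℕ × ℕ)) :=
  listsUpTo (List.range (2 * periodBound T) ×ˢ List.range (2 * periodBound T)) (lengthBound T)

def HasSmallWitness (M : NFAEnc) : Prop :=
  ∃ k < 3 * periodBound M.1, ∃ es ∈ candidates M.1,
    (∃ qf ∈ M.2.2, qf ∈ (encode k es).foldl (stepList M.1) [M.2.1]) ∧
      ∃ C ∈ listsUpTo (es.map Prod.fst) k, ∀ e ∈ es, ∃ e' ∈ es, e'.2 = e.2 ∧ e'.1 ∈ C

theorem exists_coverable_iff_hasSmallWitness (M : NFAEnc) :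
    (∃ k es, encode k es ∈ encLang M ∧ Coverable k es) ↔ HasSmallWitness M := by
  simp_rw [HasSmallWitness, candidates, ← mem_encLang_iff_stepList,
    ← coverable_iff_exists_mem_listsUpTo, mem_listsUpTo]
  constructor
  · rintro ⟨k, es, hw, hc⟩
    obtain ⟨qf, hqf, hrun⟩ := mem_encLang_iff_run.1 hw
    obtain ⟨k', hk', es', hlen, hval, hrun', hc'⟩ := exists_small_of_run hrun hc
    refine ⟨k', hk', es', ⟨hlen, fun e he => ?_⟩, mem_encLang_iff_run.2 ⟨qf, hqf, hrun'⟩, hc'⟩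
    exact List.mem_product.2 ⟨List.mem_range.2 (hval e he).1, List.mem_range.2 (hval e he).2⟩
  · rintro ⟨k, -, es, -, hw, hc⟩
    exact ⟨k, es, hw, hc⟩

section Primrec

open Primrec

theorem primrec_stepList :
    Primrec fun p : TransitionList × List ℕ × Letter => stepList p.1 p.2.1 p.2.2 := by
  have hR : PrimrecRel fun (tr : ℕ × Letter × ℕ) (q : List ℕ × Letter) =>
      tr.1 ∈ q.1 ∧ tr.2.1 = q.2 :=
    PrimrecPred.and (PrimrecRel.mem.comp (fst.comp fst) (fst.comp snd))
      (Primrec.eq.comp (fst.comp (snd.comp fst)) (snd.comp snd))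
  exact list_map ((PrimrecRel.listFilter hR).comp fst snd) (snd.comp (snd.comp snd)).to₂

theorem primrecRel_accepts : PrimrecRel fun (M : NFAEnc) (w : Word) =>
    ∃ qf ∈ M.2.2, qf ∈ w.foldl (stepList M.1) [M.2.1] := by
  have hrun : Primrec fun p : NFAEnc × Word => p.2.foldl (stepList p.1.1) [p.1.2.1] :=
    list_foldl (h := fun p q => stepList p.1.1 q.1 q.2) snd
      (list_cons.comp (fst.comp (snd.comp fst)) (const []))
      (primrec_stepList.comp (pair (fst.comp (fst.comp fst)) snd)).to₂
  exact PrimrecPred.exists_mem (snd.comp (snd.comp fst)) (PrimrecRel.mem.comp snd (hrun.comp fst))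

theorem primrecRel_exists_cover : PrimrecRel fun (es : List (ℕ × ℕ)) (k : ℕ) =>
    ∃ C ∈ listsUpTo (es.map Prod.fst) k, ∀ e ∈ es, ∃ e' ∈ es, e'.2 = e.2 ∧ e'.1 ∈ C := by
  have hcovers : PrimrecRel fun (es : List (ℕ × ℕ)) (C : List ℕ) =>
      ∀ e ∈ es, ∃ e' ∈ es, e'.2 = e.2 ∧ e'.1 ∈ C :=
    PrimrecPred.forall_mem fst (PrimrecPred.exists_mem (fst.comp fst)
      (PrimrecPred.and (Primrec.eq.comp (snd.comp snd) (snd.comp (snd.comp fst)))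
        (PrimrecRel.mem.comp (fst.comp snd) (snd.comp (fst.comp fst)))))
  exact PrimrecPred.exists_mem (Primrec.listsUpTo.comp (list_map fst (fst.comp snd).to₂) snd)
    (hcovers.comp (fst.comp fst) snd)

theorem primrec_token (a b c : Letter) : Primrec fun n => a :: (List.replicate n b ++ [c]) :=
  list_cons.comp (const a) (list_append.comp (list_replicate b) (const [c]))

theorem primrec_encode : Primrec₂ encode :=
  list_append.comp ((primrec_token _ _ _).comp fst) (list_flatten.comp (list_map snd
    (list_append.comp ((primrec_token _ _ _).comp (fst.comp snd))
      ((primrec_token _ _ _).comp (snd.comp snd))).to₂))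

theorem primrec_periodBound : Primrec periodBound := by
  have hn : Primrec fun T : TransitionList => 2 * T.length := nat_mul.comp (const 2) list_length
  exact nat_pow.comp (const 2) (nat_mul.comp hn hn)

theorem primrec_candidates : Primrec candidates := by
  have hrange : Primrec fun T => List.range (2 * periodBound T) :=
    list_range.comp (nat_mul.comp (const 2) primrec_periodBound)
  have hlength : Primrec lengthBound := nat_mul.comp
    (nat_add.comp (nat_pow.comp (nat_mul.comp (const 2) primrec_periodBound) (const 2)) (const 1))
    (nat_add.comp (nat_mul.comp (const 2) list_length) (const 1))
  exact Primrec.listsUpTo.comp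
    (list_flatMap hrange (list_map (hrange.comp fst) (pair (snd.comp fst) snd).to₂).to₂) hlength

theorem primrecPred_hasSmallWitness : PrimrecPred HasSmallWitness := by
  have hwitness : PrimrecRel fun (p : NFAEnc × ℕ) (es : List (ℕ × ℕ)) =>
      (∃ qf ∈ p.1.2.2, qf ∈ (encode p.2 es).foldl (stepList p.1.1) [p.1.2.1]) ∧
        ∃ C ∈ listsUpTo (es.map Prod.fst) p.2, ∀ e ∈ es, ∃ e' ∈ es, e'.2 = e.2 ∧ e'.1 ∈ C :=
    PrimrecPred.and
      (primrecRel_accepts.comp (fst.comp fst) (primrec_encode.comp (snd.comp fst) snd))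
      (primrecRel_exists_cover.comp snd (snd.comp fst))
  exact (PrimrecPred.exists_mem
    (list_range.comp (nat_mul.comp (const 3) (primrec_periodBound.comp fst)))
    (PrimrecPred.exists_mem (primrec_candidates.comp (fst.comp fst)) hwitness).primrecRel).of_eq
    fun M => by simp only [List.mem_range, HasSmallWitness]

end Primrec

/-- `int_Reg(Hitting Set)` is decidable: the predicate on (finite
encodings of) NFAs `M` over `Σ`, asserting that some `w ∈ L(M) ∩ Enc` with
`decode_hyp(w) = (H, k)` satisfies that `H` has a hitting set of size at most `k`,
is computable. -/
theorem stmt19 :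
    ComputablePred (fun M : NFAEnc =>
      ∃ w : Word, w ∈ encLang M ∧ w ∈ Enc ∧
        ∃ (H : FinHypergraph) (k : ℕ), decodesToHyp w H k ∧ HasHittingSet H k) :=
  primrecPred_hasSmallWitness.computablePred.of_eq fun M =>
    ((exists_hittingSet_iff M).trans (exists_coverable_iff_hasSmallWitness M)).symm
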